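/- arXiv:2008.13138 — 5 statements merged into one kernel-verified Lean document; each statement's English description precedes it below -/
import Mathlib

section
/- For each i ∈ Z/nZ and ℓ ≥ 1, the representation U(i;ℓ) of the equioriented cycle Δ_n is indecomposable. -/
/-- The shift operator of the indecomposable representation `U(i;ℓ)`:
`A w_k = w_{k+1}` for `k < ℓ` and `A w_ℓ = 0` (coordinates `w_k = e_{k-1}`,
so `(A v) m = v (m-1)` and `(A v) 0 = 0`). -/
noncomputable def shiftL (ℓ : ℕ) : (Fin ℓ → ℂ) →ₗ[ℂ] (Fin ℓ → ℂ) where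
  toFun v m := if h : (m : ℕ) = 0 then 0
    else v ⟨(m : ℕ) - 1, lt_of_le_of_lt (Nat.sub_le _ _) m.isLt⟩
  map_add' u v := by funext m; by_cases h : (m : ℕ) = 0 <;> simp [h]
  map_smul' c v := by funext m; by_cases h : (m : ℕ) = 0 <;> simp [h]

/-- The `ℤ/nℤ`-grading of `U(i;ℓ)`: the basis vector `w_k` (i.e. `e_{k-1}`, `k = 1,…,ℓ`)
has degree `i + k - ℓ` mod `n`; `UiGrade n i ℓ d` is the span of the `w_k` of degree `d`. -/
noncomputable def UiGrade (n : ℕ) (i : ZMod n) (ℓ : ℕ) (d : ZMod n) :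
    Submodule ℂ (Fin ℓ → ℂ) :=
  Submodule.span ℂ
    {v | ∃ k : Fin ℓ, i + (((k : ℕ) + 1 : ℕ) : ZMod n) - ((ℓ : ℕ) : ZMod n) = d ∧
      v = Pi.single k 1}

lemma shiftL_apply (ℓ : ℕ) (v : Fin ℓ → ℂ) (m : Fin ℓ) :
    shiftL ℓ v m = if h : (m : ℕ) = 0 then 0
      else v ⟨(m : ℕ) - 1, lt_of_le_of_lt (Nat.sub_le _ _) m.isLt⟩ := rfl

lemma shiftL_pow_apply (ℓ k : ℕ) (v : Fin ℓ → ℂ) (m : Fin ℓ) :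
    ((shiftL ℓ ^ k) v) m = if h : (m : ℕ) < k then 0
      else v ⟨(m : ℕ) - k, lt_of_le_of_lt (Nat.sub_le _ _) m.isLt⟩ := by
  induction k generalizing m with
  | zero => simp
  | succ k ih =>
    rw [pow_succ', Module.End.mul_apply, shiftL_apply]
    by_cases h0 : (m : ℕ) = 0
    · simp [h0]
    · rw [dif_neg h0, ih]
      by_cases h1 : (m : ℕ) - 1 < k
      · rw [dif_pos h1, dif_pos (by omega)]
      · rw [dif_neg h1, dif_neg (by omega)]
        congr 1
        exact Fin.ext (by simp; omega)

lemma shiftL_pow_mem {ℓ : ℕ} {p : Submodule ℂ (Fin ℓ → ℂ)}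
    (hp : p.map (shiftL ℓ) ≤ p) (k : ℕ) {v : Fin ℓ → ℂ} (hv : v ∈ p) :
    (shiftL ℓ ^ k) v ∈ p := by
  induction k with
  | zero => simpa using hv
  | succ k ih =>
    rw [pow_succ', Module.End.mul_apply]
    exact hp ⟨_, ih, rfl⟩

lemma single_mem {ℓ : ℕ} (hℓ : 1 ≤ ℓ) {p : Submodule ℂ (Fin ℓ → ℂ)}
    (hp : p.map (shiftL ℓ) ≤ p) {v : Fin ℓ → ℂ} (hv : v ∈ p) (hv0 : v ≠ 0) :
    Pi.single (⟨ℓ - 1, by omega⟩ : Fin ℓ) (1 : ℂ) ∈ p := by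
  have hex : ∃ j : ℕ, ∃ h : j < ℓ, v ⟨j, h⟩ ≠ 0 := by
    obtain ⟨a, ha⟩ := Function.ne_iff.mp hv0
    exact ⟨a, a.isLt, by simpa using ha⟩
  classical
  set j := Nat.find hex with hjdef
  obtain ⟨hjlt, hjne⟩ := Nat.find_spec hex
  have hmin : ∀ m < j, ∀ h : m < ℓ, v ⟨m, h⟩ = 0 := by
    intro m hm h
    by_contra hne
    exact Nat.find_min hex hm ⟨h, hne⟩
  have hkey : (shiftL ℓ ^ (ℓ - 1 - j)) v
      = v ⟨j, hjlt⟩ • (Pi.single (⟨ℓ - 1, by omega⟩ : Fin ℓ) (1 : ℂ) : Fin ℓ → ℂ) := by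
    funext m
    rw [shiftL_pow_apply]
    rcases eq_or_ne (m : ℕ) (ℓ - 1) with hm | hm
    · rw [dif_neg (by omega)]
      have hme : m = (⟨ℓ - 1, by omega⟩ : Fin ℓ) := Fin.ext hm
      rw [hme, Pi.smul_apply, Pi.single_eq_same, smul_eq_mul, mul_one]
      congr 1
      exact Fin.ext (by simp; omega)
    · have hmlt : (m : ℕ) < ℓ - 1 := by have := m.isLt; omega
      have hne2 : m ≠ (⟨ℓ - 1, by omega⟩ : Fin ℓ) :=
        fun hc => hm (congrArg Fin.val hc)
      have hsingle : (Pi.single (⟨ℓ - 1, by omega⟩ : Fin ℓ) (1 : ℂ) : Fin ℓ → ℂ) m = 0 := by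
        rw [Pi.single_eq_of_ne hne2]
      rw [Pi.smul_apply, hsingle, smul_zero]
      by_cases h : (m : ℕ) < ℓ - 1 - j
      · rw [dif_pos h]
      · rw [dif_neg h]
        exact hmin _ (by omega) _
  have hw : (shiftL ℓ ^ (ℓ - 1 - j)) v ∈ p := shiftL_pow_mem hp _ hv
  rw [hkey] at hw
  have := p.smul_mem (v ⟨j, hjlt⟩)⁻¹ hw
  rwa [smul_smul, inv_mul_cancel₀ hjne, one_smul] at this

/-- For each `i ∈ ℤ/nℤ` and `ℓ ≥ 1`, the representation `U(i;ℓ)` of the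
equioriented cycle `Δ_n` is indecomposable: it is nonzero and it admits no direct sum
decomposition into two nonzero graded `A`-stable subrepresentations. -/
theorem Ui_indecomposable (n : ℕ) (i : ZMod n) (ℓ : ℕ) (hℓ : 1 ≤ ℓ) :
    (⊤ : Submodule ℂ (Fin ℓ → ℂ)) ≠ ⊥ ∧
    ∀ p q : Submodule ℂ (Fin ℓ → ℂ),
      (p = ⨆ d : ZMod n, p ⊓ UiGrade n i ℓ d) →
      (q = ⨆ d : ZMod n, q ⊓ UiGrade n i ℓ d) →
      p.map (shiftL ℓ) ≤ p → q.map (shiftL ℓ) ≤ q →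
      IsCompl p q → p = ⊥ ∨ q = ⊥ := by
  constructor
  · haveI : Nonempty (Fin ℓ) := ⟨⟨0, hℓ⟩⟩
    exact top_ne_bot
  · intro p q _ _ hpA hqA hcompl
    by_contra h
    push_neg at h
    obtain ⟨hp, hq⟩ := h
    obtain ⟨x, hxp, hx0⟩ := Submodule.ne_bot_iff p |>.mp hp
    obtain ⟨y, hyq, hy0⟩ := Submodule.ne_bot_iff q |>.mp hq
    have hep := single_mem hℓ hpA hxp hx0
    have heq := single_mem hℓ hqA hyq hy0
    have : Pi.single (⟨ℓ - 1, by omega⟩ : Fin ℓ) (1 : ℂ) ∈ p ⊓ q := ⟨hep, heq⟩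
    rw [hcompl.disjoint.eq_bot, Submodule.mem_bot] at this
    have := congrFun this ⟨ℓ - 1, by omega⟩
    simp at this
end

section
/- Every indecomposable nilpotent representation M of the equioriented cycle Δ_n is isomorphic to U(i;ℓ) for some i ∈ Z/nZ and some ℓ ≥ 1. -/
/-!
Let `ℓ` be the nilpotency index of `A`, pick a homogeneous `v` with `A^(ℓ-1) v ≠ 0` and a
functional `f` vanishing off the degree of `A^(ℓ-1) v` with `f (A^(ℓ-1) v) ≠ 0`. The matrix
`(f (A^(j+k) v))_{j,k<ℓ}` is anti-triangular with nonzero anti-diagonal, so the vectors `A^k v`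
are independent and `P = {x | f (A^k x) = 0 for all k < ℓ}` is a complement of their span `W`.
Both `P` and `W` are graded and `A`-stable, so indecomposability forces `W = V`, and the basis
`A^k v` identifies `V` with `U(i;ℓ)`.
-/

open Submodule Function

theorem isCompl_ker_range_of_bijective_comp {R U V : Type*} [Ring R] [AddCommGroup U]
    [Module R U] [AddCommGroup V] [Module R V] {φ : V →ₗ[R] U} {L : U →ₗ[R] V}
    (h : Bijective (φ ∘ₗ L)) : IsCompl (LinearMap.ker φ) (LinearMap.range L) := by
  constructor
  · rw [Submodule.disjoint_def]
    rintro _ hx ⟨u, rfl⟩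
    rw [h.injective (show (φ ∘ₗ L) u = (φ ∘ₗ L) 0 by simpa using hx), map_zero]
  · rw [codisjoint_iff_exists_add_eq]
    intro z
    obtain ⟨u, hu⟩ := h.surjective (φ z)
    exact ⟨z - L u, L u, by simp [← hu], LinearMap.mem_range_self L u, sub_add_cancel z (L u)⟩

section IterateDual

variable {R V : Type*} [CommSemiring R] [AddCommMonoid V] [Module R V]
  (A : Module.End R V) (f : Module.Dual R V) (ℓ : ℕ)

def iterateDual : V →ₗ[R] Fin ℓ → R :=
  LinearMap.pi fun k : Fin ℓ => f ∘ₗ A ^ (k : ℕ)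

variable {A f ℓ}

@[simp]
theorem iterateDual_apply (x : V) (k : Fin ℓ) : iterateDual A f ℓ x k = f ((A ^ (k : ℕ)) x) :=
  rfl

theorem map_ker_iterateDual_le (hA : A ^ ℓ = 0) :
    (LinearMap.ker (iterateDual A f ℓ)).map A ≤ LinearMap.ker (iterateDual A f ℓ) := by
  rintro _ ⟨x, hx, rfl⟩
  simp only [SetLike.mem_coe, LinearMap.mem_ker, funext_iff, iterateDual_apply,
    Pi.zero_apply] at hx ⊢
  intro k
  rw [← Module.End.mul_apply, ← pow_succ]
  by_cases hk : (k : ℕ) + 1 < ℓ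
  · exact hx ⟨k + 1, hk⟩
  · rw [pow_eq_zero_of_le (by omega) hA, LinearMap.zero_apply, map_zero]

theorem map_span_pow_apply_le {v : V} (hv : (A ^ ℓ) v = 0) :
    (span R (Set.range fun k : Fin ℓ => (A ^ (k : ℕ)) v)).map A ≤
      span R (Set.range fun k : Fin ℓ => (A ^ (k : ℕ)) v) := by
  rw [map_span_le]
  rintro _ ⟨k, rfl⟩
  rw [← Module.End.mul_apply, ← pow_succ']
  by_cases hk : (k : ℕ) + 1 < ℓ
  · exact subset_span ⟨⟨k + 1, hk⟩, rfl⟩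
  · rw [Module.End.pow_map_zero_of_le (by omega) hv]
    exact zero_mem _

end IterateDual

section CyclicComplement

variable {K V : Type*} [Field K] [AddCommGroup V] [Module K V]
  {A : Module.End K V} {f : Module.Dual K V} {ℓ : ℕ} {v : V}

theorem apply_pow_sum_smul_pow_apply (hv : (A ^ ℓ) v = 0) (c : Fin ℓ → K) (m : Fin ℓ)
    (hc : ∀ j < m, c j = 0) :
    f ((A ^ (ℓ - 1 - m)) (∑ j, c j • (A ^ (j : ℕ)) v)) = c m * f ((A ^ (ℓ - 1)) v) := by
  simp only [map_sum, map_smul, ← Module.End.mul_apply, ← pow_add, smul_eq_mul]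
  rw [Finset.sum_eq_single m]
  · rw [show ℓ - 1 - m + m = ℓ - 1 by omega]
  · intro j _ hjm
    rcases lt_or_gt_of_ne hjm with h | h
    · rw [hc j h, zero_mul]
    · rw [Module.End.pow_map_zero_of_le (by omega) hv, map_zero, mul_zero]
  · simp

theorem injective_iterateDual_comp_linearCombination (hv : (A ^ ℓ) v = 0)
    (hfv : f ((A ^ (ℓ - 1)) v) ≠ 0) :
    Injective (iterateDual A f ℓ ∘ₗ
      Fintype.linearCombination K fun k : Fin ℓ => (A ^ (k : ℕ)) v) := by
  rw [← LinearMap.ker_eq_bot, eq_bot_iff]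
  intro c hc
  rw [LinearMap.mem_ker, LinearMap.comp_apply, Fintype.linearCombination_apply] at hc
  rw [mem_bot]
  funext m
  induction m using WellFoundedLT.induction with
  | ind m ih =>
    have hm := congr_fun hc ⟨ℓ - 1 - m, by omega⟩
    rw [iterateDual_apply, apply_pow_sum_smul_pow_apply hv c m ih, Pi.zero_apply] at hm
    exact (mul_eq_zero.1 hm).resolve_right hfv

theorem linearIndependent_pow_apply (hv : (A ^ ℓ) v = 0) (hv0 : (A ^ (ℓ - 1)) v ≠ 0) :
    LinearIndependent K fun k : Fin ℓ => (A ^ (k : ℕ)) v := by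
  obtain ⟨f, hfv⟩ := Module.Projective.exists_dual_ne_zero K hv0
  have hinj := injective_iterateDual_comp_linearCombination (f := f) hv hfv
  rw [LinearMap.coe_comp] at hinj
  exact linearIndependent_iff_injective_fintypeLinearCombination.2 hinj.of_comp

theorem isCompl_ker_iterateDual_span (hv : (A ^ ℓ) v = 0) (hfv : f ((A ^ (ℓ - 1)) v) ≠ 0) :
    IsCompl (LinearMap.ker (iterateDual A f ℓ))
      (span K (Set.range fun k : Fin ℓ => (A ^ (k : ℕ)) v)) := by
  have hinj := injective_iterateDual_comp_linearCombination hv hfv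
  rw [← Fintype.range_linearCombination]
  exact isCompl_ker_range_of_bijective_comp ⟨hinj, LinearMap.injective_iff_surjective.1 hinj⟩

end CyclicComplement

section Graded

variable {ι R V : Type*} [CommSemiring R] [AddCommMonoid V] [Module R V]
  {M : ι → Submodule R V}

theorem pow_apply_mem_add [AddMonoidWithOne ι] {A : Module.End R V}
    (hA : ∀ d, (M d).map A ≤ M (d + 1)) {d : ι} {x : V} (hx : x ∈ M d) (k : ℕ) :
    (A ^ k) x ∈ M (d + k) := by
  induction k with
  | zero => simpa using hx
  | succ k ih =>
    rw [pow_succ', Module.End.mul_apply, Nat.cast_succ, ← add_assoc]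
    exact hA _ (mem_map_of_mem ih)

theorem span_range_eq_iSup_inf {κ : Type*} {u : κ → V} (hu : ∀ k, ∃ d, u k ∈ M d) :
    span R (Set.range u) = ⨆ d, span R (Set.range u) ⊓ M d := by
  refine le_antisymm (span_le.2 ?_) (iSup_le fun d => inf_le_left)
  rintro _ ⟨k, rfl⟩
  obtain ⟨d, hd⟩ := hu k
  exact mem_iSup_of_mem d ⟨subset_span ⟨k, rfl⟩, hd⟩

variable [DecidableEq ι] [DirectSum.Decomposition M]

theorem exists_mem_apply_ne_zero_of_ne_zero {N : Type*} [AddCommMonoid N] [Module R N]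
    {g : V →ₗ[R] N} (hg : g ≠ 0) : ∃ d, ∃ x ∈ M d, g x ≠ 0 := by
  by_contra! h
  exact hg (DirectSum.decompose_lhom_ext M fun d => LinearMap.ext fun x => h d x x.2)

theorem eq_iSup_inf_of_isHomogeneous {p : Submodule R V} (hp : p.IsHomogeneous M) :
    p = ⨆ d, p ⊓ M d := by
  classical
  refine le_antisymm (fun x hx => ?_) (iSup_le fun d => inf_le_left)
  rw [← DirectSum.sum_support_decompose M x]
  exact sum_mem fun d _ => mem_iSup_of_mem d ⟨hp d hx, (DirectSum.decompose M x d).2⟩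

theorem apply_decompose_eq_of_forall_ne {N : Type*} [AddCommMonoid N] [Module R N]
    {g : V →ₗ[R] N} {e : ι} (hg : ∀ d ≠ e, ∀ y ∈ M d, g y = 0) (x : V) :
    g (DirectSum.decompose M x e) = g x := by
  induction x using DirectSum.Decomposition.inductionOn M with
  | zero => simp
  | @homogeneous d y =>
    by_cases h : d = e
    · subst h
      rw [DirectSum.decompose_of_mem_same M y.2]
    · rw [DirectSum.decompose_of_mem_ne M y.2 h, map_zero, hg d h y y.2]
  | add x y hx hy =>
    rw [DirectSum.decompose_add, DirectSum.add_apply, coe_add, map_add, hx, hy, map_add]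

theorem isHomogeneous_ker_pi {κ : Type*} {g : κ → V →ₗ[R] R}
    (hg : ∀ k, ∃ e, ∀ d ≠ e, ∀ y ∈ M d, g k y = 0) :
    (LinearMap.ker (LinearMap.pi g)).IsHomogeneous M := by
  intro d x hx
  simp only [LinearMap.mem_ker, funext_iff, LinearMap.pi_apply, Pi.zero_apply] at hx ⊢
  intro k
  obtain ⟨e, he⟩ := hg k
  by_cases h : d = e
  · subst h
    rw [apply_decompose_eq_of_forall_ne he, hx]
  · exact he d h _ (DirectSum.decompose M x d).2

theorem isHomogeneous_ker_iterateDual [AddGroupWithOne ι] {A : Module.End R V}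
    {f : Module.Dual R V} {e : ι} (hA : ∀ d, (M d).map A ≤ M (d + 1))
    (hf : ∀ d ≠ e, ∀ y ∈ M d, f y = 0) (ℓ : ℕ) :
    (LinearMap.ker (iterateDual A f ℓ)).IsHomogeneous M :=
  isHomogeneous_ker_pi fun k => ⟨e - k, fun d hd _ hy =>
    hf (d + k) (fun h => hd (eq_sub_of_add_eq h)) _ (pow_apply_mem_add hA hy k)⟩

end Graded

theorem exists_dual_apply_ne_zero_of_mem {ι R V : Type*} [DecidableEq ι] [CommSemiring R]
    [AddCommMonoid V] [Module R V] [Module.Projective R V] {M : ι → Submodule R V}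
    [DirectSum.Decomposition M] {e : ι} {x : V}
    (hx : x ∈ M e) (hx0 : x ≠ 0) :
    ∃ f : Module.Dual R V, f x ≠ 0 ∧ ∀ d ≠ e, ∀ y ∈ M d, f y = 0 := by
  obtain ⟨g, hg⟩ := Module.Projective.exists_dual_ne_zero R hx0
  let π : V →ₗ[R] V := (M e).subtype ∘ₗ DirectSum.component R ι (fun d => M d) e ∘ₗ
    (DirectSum.decomposeLinearEquiv M).toLinearMap
  refine ⟨g ∘ₗ π, ?_, fun d hd y hy => ?_⟩
  · simpa [π, ← DirectSum.apply_eq_component, DirectSum.decomposeLinearEquiv_apply,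
      DirectSum.decompose_of_mem_same M hx] using hg
  · simp [π, ← DirectSum.apply_eq_component, DirectSum.decomposeLinearEquiv_apply,
      DirectSum.decompose_of_mem_ne M hy hd]

theorem exists_isHomogeneous_isCompl_span_pow_apply {ι K V : Type*} [AddGroupWithOne ι]
    [DecidableEq ι] [Field K] [AddCommGroup V] [Module K V] {M : ι → Submodule K V}
    [DirectSum.Decomposition M] {A : Module.End K V} (hA : ∀ d, (M d).map A ≤ M (d + 1))
    {ℓ : ℕ} (hAℓ : A ^ ℓ = 0) {i₀ : ι} {v : V} (hv : v ∈ M i₀) (hv0 : (A ^ (ℓ - 1)) v ≠ 0) :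
    ∃ P : Submodule K V, P.IsHomogeneous M ∧ P.map A ≤ P ∧
      IsCompl P (span K (Set.range fun k : Fin ℓ => (A ^ (k : ℕ)) v)) := by
  obtain ⟨f, hfv, hf⟩ := exists_dual_apply_ne_zero_of_mem (pow_apply_mem_add hA hv _) hv0
  have hAv : (A ^ ℓ) v = 0 := by rw [hAℓ, LinearMap.zero_apply]
  exact ⟨_, isHomogeneous_ker_iterateDual hA hf ℓ, map_ker_iterateDual_le hAℓ,
    isCompl_ker_iterateDual_span hAv hfv⟩

theorem Module.Basis.equivFun_apply_self {R V ι : Type*} [Semiring R] [AddCommMonoid V]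
    [Module R V] [Finite ι] [DecidableEq ι] (B : Module.Basis ι R V) (i : ι) :
    B.equivFun (B i) = Pi.single i 1 := by
  rw [← Basis.equivFun_symm_single B i, LinearEquiv.apply_symm_apply]

section ShiftRepresentation

theorem shiftL_single {ℓ : ℕ} (k : Fin ℓ) :
    shiftL ℓ (Pi.single k 1) = if h : (k : ℕ) + 1 < ℓ then Pi.single ⟨k + 1, h⟩ 1 else 0 := by
  funext m
  simp only [shiftL, LinearMap.coe_mk, AddHom.coe_mk]
  split_ifs <;> simp only [Pi.single_apply, Fin.ext_iff, Pi.zero_apply] <;> split_ifs <;>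
    first | rfl | (exfalso; omega)

variable {V : Type*} [AddCommGroup V] [Module ℂ V] {ℓ : ℕ}

theorem equivFun_apply_eq_shiftL {A : Module.End ℂ V} {v : V} (B : Module.Basis (Fin ℓ) ℂ V)
    (hB : ∀ k : Fin ℓ, B k = (A ^ (k : ℕ)) v) (hv : (A ^ ℓ) v = 0) (x : V) :
    B.equivFun (A x) = shiftL ℓ (B.equivFun x) := by
  suffices (B.equivFun : V →ₗ[ℂ] Fin ℓ → ℂ) ∘ₗ A = shiftL ℓ ∘ₗ B.equivFun from
    LinearMap.congr_fun this x
  refine B.ext fun k => ?_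
  simp only [LinearMap.comp_apply, LinearEquiv.coe_coe, B.equivFun_apply_self, shiftL_single]
  rw [hB, ← Module.End.mul_apply, ← pow_succ']
  split_ifs with h
  · rw [← hB ⟨k + 1, h⟩, B.equivFun_apply_self]
  · rw [Module.End.pow_map_zero_of_le (by omega) hv, map_zero]

theorem map_equivFun_eq_UiGrade {n : ℕ} {M : ZMod n → Submodule ℂ V} (hM : iSupIndep M)
    (B : Module.Basis (Fin ℓ) ℂ V) {i₀ : ZMod n} (hB : ∀ k : Fin ℓ, B k ∈ M (i₀ + k))
    (d : ZMod n) :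
    (M d).map (B.equivFun : V →ₗ[ℂ] Fin ℓ → ℂ) = UiGrade n (i₀ + ℓ - 1) ℓ d := by
  let S : ZMod n → Submodule ℂ V := fun d => span ℂ (B '' {k | i₀ + k = d})
  have hSM : S ≤ M := fun d => span_le.2 (by rintro _ ⟨k, rfl, rfl⟩; exact hB k)
  have hS : iSup S = ⊤ := by
    rw [eq_top_iff, ← B.span_eq, span_le]
    rintro _ ⟨k, rfl⟩
    exact mem_iSup_of_mem (i₀ + k) (subset_span ⟨k, rfl, rfl⟩)
  rw [← (hM.le_iff_eq_of_iSup_eq_top hS).1 hSM, map_span, ← Set.image_comp, UiGrade]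
  congr 1
  ext w
  simp [B.equivFun_apply_self, eq_comm, add_sub_right_comm]

end ShiftRepresentation

theorem indecomposable_nilpotent_iso_Ui_general
    (n : ℕ) (V : Type) [AddCommGroup V] [Module ℂ V]
    (M : ZMod n → Submodule ℂ V) (hM : DirectSum.IsInternal M)
    (A : V →ₗ[ℂ] V) (hA : ∀ i : ZMod n, (M i).map A ≤ M (i + 1))
    -- nilpotency of the representation
    (hnil : ∃ N : ℕ, ∀ i : ZMod n, ∀ x ∈ M i, (A ^ N) x = 0)
    -- indecomposability: nonzero, and no splitting into two nonzero graded A-stable parts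
    (hne : (⊤ : Submodule ℂ V) ≠ ⊥)
    (hindec : ∀ p q : Submodule ℂ V,
      (p = ⨆ d : ZMod n, p ⊓ M d) → (q = ⨆ d : ZMod n, q ⊓ M d) →
      p.map A ≤ p → q.map A ≤ q → IsCompl p q → p = ⊥ ∨ q = ⊥) :
    ∃ (i : ZMod n) (ℓ : ℕ), 1 ≤ ℓ ∧
      ∃ e : V ≃ₗ[ℂ] (Fin ℓ → ℂ),
        (∀ d : ZMod n, (M d).map (e : V →ₗ[ℂ] (Fin ℓ → ℂ)) = UiGrade n i ℓ d) ∧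
        ∀ v : V, e (A v) = shiftL ℓ (e v) := by
  let _ := hM.chooseDecomposition
  have : Nontrivial V := not_subsingleton_iff_nontrivial.1 fun _ => hne (Subsingleton.elim _ _)
  obtain ⟨N, hN⟩ := hnil
  have hAnil : IsNilpotent A :=
    ⟨N, DirectSum.decompose_lhom_ext M fun d => LinearMap.ext fun x => hN d x x.2⟩
  set ℓ := nilpotencyClass A
  have hℓ : 0 < ℓ := pos_nilpotencyClass_iff.2 hAnil
  have hAv (v : V) : (A ^ ℓ) v = 0 := by rw [pow_nilpotencyClass hAnil, LinearMap.zero_apply]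
  obtain ⟨i₀, v, hv, hv0⟩ :=
    exists_mem_apply_ne_zero_of_ne_zero (M := M) (pow_pred_nilpotencyClass hAnil)
  obtain ⟨P, hP, hPA, hcompl⟩ :=
    exists_isHomogeneous_isCompl_span_pow_apply hA (pow_nilpotencyClass hAnil) hv hv0
  set W := span ℂ (Set.range fun k : Fin ℓ => (A ^ (k : ℕ)) v)
  have hW : W = ⊤ := by
    rcases hindec P W (eq_iSup_inf_of_isHomogeneous hP)
      (span_range_eq_iSup_inf fun k => ⟨_, pow_apply_mem_add hA hv k⟩) hPA
      (map_span_pow_apply_le (hAv v)) hcompl with hP0 | hW0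
    · exact eq_top_of_bot_isCompl (hP0 ▸ hcompl)
    · have hv_ne : v ≠ 0 := fun h => hv0 (by rw [h, map_zero])
      exact absurd ((mem_bot ℂ).1 (hW0 ▸ subset_span ⟨⟨0, hℓ⟩, by simp⟩)) hv_ne
  let B := Module.Basis.mk (linearIndependent_pow_apply (hAv v) hv0) hW.ge
  have hB (k : Fin ℓ) : B k = (A ^ (k : ℕ)) v := Module.Basis.mk_apply _ _ k
  exact ⟨i₀ + ℓ - 1, ℓ, hℓ, B.equivFun,
    map_equivFun_eq_UiGrade hM.submodule_iSupIndep B fun k => hB k ▸ pow_apply_mem_add hA hv k,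
    equivFun_apply_eq_shiftL B hB (hAv v)⟩

/-- Every indecomposable nilpotent representation `M` of the
equioriented cycle `Δ_n` — modelled as a finite-dimensional `ℤ/nℤ`-graded complex vector
space `V = ⊕ M i` with an endomorphism `A` with `A (M i) ⊆ M (i+1)` — is isomorphic, as a
representation (a grading-preserving linear equivalence intertwining the endomorphisms),
to `U(i;ℓ)` for some vertex `i` and some `ℓ ≥ 1`. -/
theorem indecomposable_nilpotent_iso_Ui
    (n : ℕ) (V : Type) [AddCommGroup V] [Module ℂ V] [FiniteDimensional ℂ V]
    (M : ZMod n → Submodule ℂ V) (hM : DirectSum.IsInternal M)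
    (A : V →ₗ[ℂ] V) (hA : ∀ i : ZMod n, (M i).map A ≤ M (i + 1))
    -- nilpotency of the representation
    (hnil : ∃ N : ℕ, ∀ i : ZMod n, ∀ x ∈ M i, (A ^ N) x = 0)
    -- indecomposability: nonzero, and no splitting into two nonzero graded A-stable parts
    (hne : (⊤ : Submodule ℂ V) ≠ ⊥)
    (hindec : ∀ p q : Submodule ℂ V,
      (p = ⨆ d : ZMod n, p ⊓ M d) → (q = ⨆ d : ZMod n, q ⊓ M d) →
      p.map A ≤ p → q.map A ≤ q → IsCompl p q → p = ⊥ ∨ q = ⊥) :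
    ∃ (i : ZMod n) (ℓ : ℕ), 1 ≤ ℓ ∧
      ∃ e : V ≃ₗ[ℂ] (Fin ℓ → ℂ),
        (∀ d : ZMod n, (M d).map (e : V →ₗ[ℂ] (Fin ℓ → ℂ)) = UiGrade n i ℓ d) ∧
        ∀ v : V, e (A v) = shiftL ℓ (e v) :=
  indecomposable_nilpotent_iso_Ui_general n V M hM A hA hnil hne hindec
end

section
/- Let M be a nilpotent representation of Δ_n with attractive grading wt on the vertices of its coefficient quiver Q(M), and let C* act on ⊕ M_i by z·b = z^{wt(b)} b for basis vectors b. Then for every subrepresentation U ∈ Gr_e(M) and every z ∈ C*, the subspace z·U is again a subrepresentation in Gr_e(M). -/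
/-- Basis of the nilpotent `Δ_n`-representation: segment `j` with positions `p < len j`. -/
abbrev SegBasis (d0 : ℕ) (len : Fin d0 → ℕ) := Σ j : Fin d0, Fin (len j)

/-- Underlying vector space of the representation. -/
abbrev SegSpace (d0 : ℕ) (len : Fin d0 → ℕ) := SegBasis d0 len → ℂ

/-- Degree (vertex of `Δ_n`) of the basis vector `b_{j,p}`: the segment `j` starts at
vertex `st j` and position `p` lies over vertex `st j + p`. -/
noncomputable def segDeg {d0 : ℕ} {len : Fin d0 → ℕ} {n : ℕ} (st : Fin d0 → ZMod n)
    (b : SegBasis d0 len) : ZMod n :=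
  st b.1 + ((b.2 : ℕ) : ZMod n)

/-- The endomorphism `A` assembled from the arrow maps: `A b_{j,p} = b_{j,p+1}`
(and `0` at the end of a segment); in coordinates `(A v) b_{j,p} = v b_{j,p-1}`. -/
noncomputable def segShift (d0 : ℕ) (len : Fin d0 → ℕ) : SegSpace d0 len →ₗ[ℂ] SegSpace d0 len where
  toFun v b := if h : (b.2 : ℕ) = 0 then 0
    else v ⟨b.1, ⟨(b.2 : ℕ) - 1, lt_of_le_of_lt (Nat.sub_le _ _) b.2.isLt⟩⟩
  map_add' u v := by funext b; by_cases h : (b.2 : ℕ) = 0 <;> simp [h]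
  map_smul' c v := by funext b; by_cases h : (b.2 : ℕ) = 0 <;> simp [h]

/-- Graded piece `M_i`: the span of the `b_{j,p}` of degree `i`. -/
noncomputable def gradedPiece {d0 : ℕ} {len : Fin d0 → ℕ} {n : ℕ} (st : Fin d0 → ZMod n) (i : ZMod n) :
    Submodule ℂ (SegSpace d0 len) :=
  Submodule.span ℂ {v | ∃ b : SegBasis d0 len, segDeg st b = i ∧ v = Pi.single b 1}

/-- The action of `γ = (γ₀, γ₁, …, γ_{d₀}) ∈ T = (ℂ*)^{d₀+1}`:
`γ · b_{j,p} = γ₀^p γ_j b_{j,p}`. -/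
noncomputable def torusOp {d0 : ℕ} {len : Fin d0 → ℕ} (γ0 : ℂˣ) (γ : Fin d0 → ℂˣ) :
    SegSpace d0 len →ₗ[ℂ] SegSpace d0 len where
  toFun v b := (γ0 : ℂ) ^ (b.2 : ℕ) * (γ b.1 : ℂ) * v b
  map_add' u v := by funext b; simp [mul_add]
  map_smul' c v := by funext b; simp; ring

/-- The `ℂ*`-action attached to a grading `wt` of the coefficient quiver:
`z · b = z^{wt b} b`. -/
noncomputable def zAct {d0 : ℕ} {len : Fin d0 → ℕ} (wt : SegBasis d0 len → ℤ) (z : ℂˣ) :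
    SegSpace d0 len →ₗ[ℂ] SegSpace d0 len where
  toFun v b := ((z ^ wt b : ℂˣ) : ℂ) * v b
  map_add' u v := by funext b; simp [mul_add]
  map_smul' c v := by funext b; simp; ring

/-- `U` is a subrepresentation of the `Δ_n`-representation `M`: a family of graded
subspaces `U i ≤ M_i` with `A (U i) ≤ U (i+1)`. -/
noncomputable def IsSubrep {d0 : ℕ} {len : Fin d0 → ℕ} {n : ℕ} (st : Fin d0 → ZMod n)
    (U : ZMod n → Submodule ℂ (SegSpace d0 len)) : Prop :=
  (∀ i, U i ≤ gradedPiece st i) ∧ ∀ i, (U i).map (segShift d0 len) ≤ U (i + 1)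

/-- Membership in the quiver Grassmannian `Gr_e(M)`. -/
noncomputable def InGrass {d0 : ℕ} {len : Fin d0 → ℕ} {n : ℕ} (st : Fin d0 → ZMod n) (e : ZMod n → ℕ)
    (U : ZMod n → Submodule ℂ (SegSpace d0 len)) : Prop :=
  IsSubrep st U ∧ ∀ i, Module.finrank ℂ (U i) = e i


section Aux

variable {d0 : ℕ} {len : Fin d0 → ℕ} {n : ℕ}

/-- Support submodule: functions vanishing outside degree `i`. -/
noncomputable def degSupp (st : Fin d0 → ZMod n) (i : ZMod n) :
    Submodule ℂ (SegSpace d0 len) where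
  carrier := {v | ∀ b, segDeg st b ≠ i → v b = 0}
  add_mem' := by intro u v hu hv b hb; simp [hu b hb, hv b hb]
  zero_mem' := by intro b hb; rfl
  smul_mem' := by intro c v hv b hb; simp [hv b hb]

lemma gradedPiece_le_degSupp (st : Fin d0 → ZMod n) (i : ZMod n) :
    gradedPiece (len := len) st i ≤ degSupp st i := by
  rw [gradedPiece, Submodule.span_le]
  rintro v ⟨b, hb, rfl⟩ b' hb'
  have : b' ≠ b := by rintro rfl; exact hb' hb
  simp [Pi.single_apply, this]

lemma zAct_comp_zAct (wt : SegBasis d0 len → ℤ) (z w : ℂˣ) (v : SegSpace d0 len) :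
    zAct wt z (zAct wt w v) = zAct wt (z * w) v := by
  funext b
  simp [zAct, mul_zpow]
  ring

lemma zAct_equiv_aux (wt : SegBasis d0 len → ℤ) (z : ℂˣ) :
    (zAct (len := len) wt z).comp (zAct wt z⁻¹) = LinearMap.id := by
  refine LinearMap.ext fun v => ?_
  show zAct wt z (zAct wt z⁻¹ v) = v
  rw [zAct_comp_zAct]
  funext b
  simp [zAct]

/-- `zAct wt z` as a linear equivalence. -/
noncomputable def zActEquiv (wt : SegBasis d0 len → ℤ) (z : ℂˣ) :
    SegSpace d0 len ≃ₗ[ℂ] SegSpace d0 len :=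
  LinearEquiv.ofLinear (zAct wt z) (zAct wt z⁻¹)
    (zAct_equiv_aux wt z)
    (by have := zAct_equiv_aux wt z⁻¹; rwa [inv_inv] at this)

lemma zAct_single (wt : SegBasis d0 len → ℤ) (z : ℂˣ) (b : SegBasis d0 len) :
    zAct wt z (Pi.single b 1) = ((z ^ wt b : ℂˣ) : ℂ) • (Pi.single b 1 : SegSpace d0 len) := by
  funext b'
  rcases eq_or_ne b' b with rfl | h
  · simp [zAct]
  · simp [zAct, Pi.single_apply, h]

lemma zAct_map_gradedPiece (st : Fin d0 → ZMod n) (wt : SegBasis d0 len → ℤ) (z : ℂˣ)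
    (i : ZMod n) :
    (gradedPiece (len := len) st i).map (zAct wt z) ≤ gradedPiece st i := by
  rw [Submodule.map_le_iff_le_comap, gradedPiece, Submodule.span_le]
  rintro v ⟨b, hb, rfl⟩
  show zAct wt z (Pi.single b 1) ∈ gradedPiece st i
  rw [zAct_single]
  exact Submodule.smul_mem _ _ (Submodule.subset_span ⟨b, hb, rfl⟩)

end Aux

/-- Let `M` be a nilpotent representation of `Δ_n` with an attractive
grading `wt` on the vertices of its coefficient quiver `Q(M)`:
(AG1) within each vertex the weights of the basis vectors are pairwise distinct
(equivalently, strictly increasing in some enumeration), and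
(AG2) along every arrow of `Q(M)` over an arrow `a` of `Δ_n` the weight increases by a
constant `d(a)`.  Let `ℂ*` act by `z · b = z^{wt b} b`.  Then for every
`U ∈ Gr_e(M)` and every `z ∈ ℂ*`, the subspace `z · U` again lies in `Gr_e(M)`. -/
theorem zAct_preserves_quiverGrassmannian
    (d0 n : ℕ) (len : Fin d0 → ℕ) (st : Fin d0 → ZMod n) (e : ZMod n → ℕ)
    (wt : SegBasis d0 len → ℤ)
    (hAG1 : ∀ b b' : SegBasis d0 len, segDeg st b = segDeg st b' →
      wt b = wt b' → b = b')
    (hAG2 : ∃ d : ZMod n → ℤ, ∀ (j : Fin d0) (p : Fin (len j))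
      (h : (p : ℕ) + 1 < len j),
      wt ⟨j, ⟨(p : ℕ) + 1, h⟩⟩ = wt ⟨j, p⟩ + d (segDeg st ⟨j, p⟩))
    (z : ℂˣ)
    (U : ZMod n → Submodule ℂ (SegSpace d0 len)) (hU : InGrass st e U) :
    InGrass st e (fun i => (U i).map (zAct wt z)) := by
  obtain ⟨d, hd⟩ := hAG2
  obtain ⟨⟨hgr, hsh⟩, hrk⟩ := hU
  -- commutation relation on graded pieces
  have key : ∀ (i : ZMod n) (v : SegSpace d0 len), v ∈ gradedPiece st i →
      zAct wt z (segShift d0 len v)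
        = ((z ^ d i : ℂˣ) : ℂ) • segShift d0 len (zAct wt z v) := by
    intro i v hv
    have hsupp := gradedPiece_le_degSupp st i hv
    funext b
    obtain ⟨j, p⟩ := b
    by_cases hp : (p : ℕ) = 0
    · simp [zAct, segShift, hp]
    · have hlt : (p : ℕ) - 1 < len j := lt_of_le_of_lt (Nat.sub_le _ _) p.isLt
      set b' : SegBasis d0 len := ⟨j, ⟨(p : ℕ) - 1, hlt⟩⟩ with hb'
      by_cases hdeg : segDeg st b' = i
      · have hsucc : (p : ℕ) - 1 + 1 = (p : ℕ) := Nat.succ_pred_eq_of_pos (Nat.pos_of_ne_zero hp)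
        have hlt2 : ((p : ℕ) - 1) + 1 < len j := by rw [hsucc]; exact p.isLt
        have hwt := hd j ⟨(p : ℕ) - 1, hlt⟩ hlt2
        have hbe : (⟨j, ⟨((p : ℕ) - 1) + 1, hlt2⟩⟩ : SegBasis d0 len) = ⟨j, p⟩ := by
          congr 1
          exact Fin.ext hsucc
        rw [hbe] at hwt
        simp only [zAct, segShift, LinearMap.coe_mk, AddHom.coe_mk, Pi.smul_apply,
          dif_neg hp, smul_eq_mul]
        rw [hwt, hdeg, zpow_add]
        push_cast
        ring
      · have hv0 : v b' = 0 := hsupp b' hdeg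
        simp only [zAct, segShift, LinearMap.coe_mk, AddHom.coe_mk, Pi.smul_apply,
          dif_neg hp, smul_eq_mul]
        rw [show v ⟨j, ⟨(p : ℕ) - 1, hlt⟩⟩ = 0 from hv0]
        simp
  refine ⟨⟨?_, ?_⟩, ?_⟩
  · intro i
    exact le_trans (Submodule.map_mono (hgr i)) (zAct_map_gradedPiece st wt z i)
  · intro i
    rintro x ⟨y, ⟨v, hv, rfl⟩, rfl⟩
    have hvgr : v ∈ gradedPiece st i := hgr i hv
    have : segShift d0 len (zAct wt z v)
        = (((z ^ d i)⁻¹ : ℂˣ) : ℂ) • zAct wt z (segShift d0 len v) := by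
      rw [key i v hvgr, smul_smul, ← Units.val_mul, inv_mul_cancel, Units.val_one, one_smul]
    rw [this]
    refine Submodule.smul_mem _ _ ?_
    exact ⟨segShift d0 len v, hsh i ⟨v, hv, rfl⟩, rfl⟩
  · intro i
    show Module.finrank ℂ ((U i).map (zAct wt z)) = e i
    have : (U i).map (zAct wt z) = (U i).map (zActEquiv (len := len) wt z : SegSpace d0 len →ₗ[ℂ] SegSpace d0 len) := rfl
    rw [this, LinearEquiv.finrank_map_eq]
    exact hrk i
end

section
/- Let M be a nilpotent representation of Δ_n with an attractive grading on Q(M) coming from segments. Then the fixed points of the induced C*-action on Gr_e(M) are exactly the subrepresentations U with each U_i spanned by a subset of the chosen basis: U_i = span{v^{(i)}_k : k ∈ K_i} for some subsets K_i ⊆ [m_i] with |K_i| = e_i. In particular, the C*-fixed points of Gr_e(M) are in bijection with the successor closed subquivers of Q(M) with dimension vector e. -/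
/-! On a graded piece `M_i` the weights of the basis vectors are pairwise distinct, so `z = 2`
acts on `M_i` diagonally with pairwise distinct eigenvalues. A `ℂ*`-stable subspace is stable
under this operator, hence the sum of its intersections with the eigenlines: it is spanned by the
basis vectors it contains. Conversely, coordinate subspaces are stable under every invertible
diagonal operator. -/

open Module Submodule

section DiagonalOperator

variable {K ι : Type*} [Field K] {D : End K (ι → K)} {f : ι → K}

lemma mem_eigenspace_iff_of_diagonal (hD : ∀ v b, D v b = f b * v b) {μ : K} {v : ι → K} :
    v ∈ D.eigenspace μ ↔ ∀ b, v b ≠ 0 → f b = μ := by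
  simp only [End.mem_eigenspace_iff, funext_iff, hD, Pi.smul_apply, smul_eq_mul]
  refine forall_congr' fun b => ?_
  rw [← sub_eq_zero, ← sub_mul, mul_eq_zero, sub_eq_zero, or_iff_not_imp_right]

variable [Fintype ι]

theorem map_spanSubset_of_diagonal (hD : ∀ v b, D v b = f b * v b) (hf : ∀ b, f b ≠ 0)
    (T : Set ι) : (Pi.spanSubset K T).map D = Pi.spanSubset K T := by
  refine le_antisymm ?_ fun v hv => ⟨fun b => (f b)⁻¹ * v b, ?_, ?_⟩
  · rintro _ ⟨v, hv, rfl⟩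
    refine Pi.mem_spanSubset_iff.2 fun b hb => ?_
    rw [hD, Pi.mem_spanSubset_iff.1 hv b hb, mul_zero]
  · refine Pi.mem_spanSubset_iff.2 fun b hb => ?_
    rw [Pi.mem_spanSubset_iff.1 hv b hb, mul_zero]
  · funext b
    rw [hD, ← mul_assoc, mul_inv_cancel₀ (hf b), one_mul]

variable [DecidableEq ι]

lemma span_image_single_one_eq_spanSubset (T : Set ι) :
    span K ((fun b => Pi.single b (1 : K)) '' T) = Pi.spanSubset K T := by
  simp only [Pi.spanSubset, Pi.basisFun_apply]

lemma iSup_eigenspace_eq_top_of_diagonal (hD : ∀ v b, D v b = f b * v b) :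
    ⨆ μ, D.eigenspace μ = ⊤ := by
  refine eq_top_iff.2 fun v _ => ?_
  rw [← Finset.univ_sum_single v]
  refine sum_mem fun b _ => mem_iSup_of_mem (f b) ((mem_eigenspace_iff_of_diagonal hD).2
    fun b' hb' => by_contra fun hne => hb' (Pi.single_eq_of_ne (fun h => hne (congrArg f h)) _))

theorem eq_spanSubset_of_diagonal_invariant (hD : ∀ v b, D v b = f b * v b)
    {W : Submodule K (ι → K)} (hW : ∀ v ∈ W, D v ∈ W) {s : Set ι} (hWs : W ≤ Pi.spanSubset K s)
    (hf : s.InjOn f) : W = Pi.spanSubset K {b ∈ s | Pi.single b 1 ∈ W} := by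
  refine le_antisymm ?_ ?_
  · refine (eq_iSup_inf_genEigenspace 1 hW (iSup_eigenspace_eq_top_of_diagonal hD)).trans_le <|
      iSup_le fun μ v ⟨hvW, hvμ⟩ =>
      Pi.mem_spanSubset_iff.2 fun b hb => by_contra fun hvb => hb ?_
    have hsupp : ∀ b', v b' ≠ 0 → b' ∈ s := fun b' h =>
      by_contra fun h' => h (Pi.mem_spanSubset_iff.1 (hWs hvW) b' h')
    have hv : v = v b • Pi.single b 1 := by
      funext b'
      by_cases hb' : v b' = 0
      · have : b' ≠ b := by rintro rfl; exact hvb hb'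
        simp [hb', this]
      · obtain rfl : b' = b := hf (hsupp b' hb') (hsupp b hvb)
          (((mem_eigenspace_iff_of_diagonal hD).1 hvμ b' hb').trans
            ((mem_eigenspace_iff_of_diagonal hD).1 hvμ b hvb).symm)
        simp
    refine ⟨hsupp b hvb, ?_⟩
    have hsingle : Pi.single b 1 = (v b)⁻¹ • v := by
      calc Pi.single b 1 = (v b)⁻¹ • (v b • Pi.single b 1) := by
            rw [smul_smul, inv_mul_cancel₀ hvb, one_smul]
        _ = (v b)⁻¹ • v := by rw [← hv]
    exact hsingle ▸ W.smul_mem _ hvW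
  · rw [← span_image_single_one_eq_spanSubset, span_le]
    rintro _ ⟨b, ⟨-, hb⟩, rfl⟩
    exact hb

end DiagonalOperator

section Segments

variable {d0 n : ℕ} {len : Fin d0 → ℕ}

lemma gradedPiece_eq_spanSubset (st : Fin d0 → ZMod n) (i : ZMod n) :
    gradedPiece (len := len) st i = Pi.spanSubset ℂ {b | segDeg st b = i} := by
  rw [gradedPiece, ← span_image_single_one_eq_spanSubset]
  congr 1
  ext v
  simp [eq_comm]

lemma segDeg_succ (st : Fin d0 → ZMod n) (j : Fin d0) (p : Fin (len j))
    (h : (p : ℕ) + 1 < len j) :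
    segDeg st (⟨j, ⟨p + 1, h⟩⟩ : SegBasis d0 len) = segDeg st ⟨j, p⟩ + 1 := by
  simp only [segDeg, Nat.cast_succ, add_assoc]

lemma segShift_single (j : Fin d0) (p : Fin (len j)) (h : (p : ℕ) + 1 < len j) :
    segShift d0 len (Pi.single ⟨j, p⟩ 1) = Pi.single ⟨j, ⟨p + 1, h⟩⟩ 1 := by
  funext ⟨j', q⟩
  simp only [segShift, LinearMap.coe_mk, AddHom.coe_mk, Pi.single_apply]
  rcases eq_or_ne j' j with rfl | hj
  · simp only [Sigma.mk.inj_iff, heq_iff_eq, true_and, Fin.ext_iff]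
    split_ifs <;> grind
  · simp [hj]

lemma injective_zpow_of_norm_ne_one {z : ℂˣ} (hz : ‖(z : ℂ)‖ ≠ 1) :
    Function.Injective fun m : ℤ => ((z ^ m : ℂˣ) : ℂ) := by
  intro a b h
  have := congrArg norm h
  simp only [Units.val_zpow_eq_zpow_val, norm_zpow] at this
  exact zpow_right_injective₀ (norm_pos_iff.2 z.ne_zero) hz this

theorem eq_spanSubset_of_zAct_invariant {st : Fin d0 → ZMod n} {wt : SegBasis d0 len → ℤ}
    (hwt : ∀ b b', segDeg st b = segDeg st b' → wt b = wt b' → b = b') {i : ZMod n}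
    {W : Submodule ℂ (SegSpace d0 len)} (hW : W ≤ gradedPiece st i)
    (hfix : ∀ z, W.map (zAct wt z) = W) :
    W = Pi.spanSubset ℂ {b | segDeg st b = i ∧ Pi.single b 1 ∈ W} := by
  set z := Units.mk0 (2 : ℂ) two_ne_zero
  have hz : ‖(z : ℂ)‖ ≠ 1 := by norm_num [z]
  refine eq_spanSubset_of_diagonal_invariant (D := zAct wt z) (fun _ _ => rfl)
    (fun v hv => hfix z ▸ mem_map_of_mem hv) (gradedPiece_eq_spanSubset st i ▸ hW) ?_
  intro b hb b' hb' h
  exact hwt b b' (hb.trans hb'.symm) (injective_zpow_of_norm_ne_one hz h)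

end Segments

theorem zAct_fixed_points_general
    (d0 n : ℕ) (len : Fin d0 → ℕ) (st : Fin d0 → ZMod n) (e : ZMod n → ℕ)
    (wt : SegBasis d0 len → ℤ)
    (hAG1 : ∀ b b' : SegBasis d0 len, segDeg st b = segDeg st b' →
      wt b = wt b' → b = b')
    (U : ZMod n → Submodule ℂ (SegSpace d0 len)) (hU : InGrass st e U) :
    (∀ z : ℂˣ, ∀ i, (U i).map (zAct wt z) = U i) ↔
    ∃ S : Set (SegBasis d0 len),
      (∀ b ∈ S, ∀ h : (b.2 : ℕ) + 1 < len b.1,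
        (⟨b.1, ⟨(b.2 : ℕ) + 1, h⟩⟩ : SegBasis d0 len) ∈ S) ∧
      (∀ i, {b ∈ S | segDeg st b = i}.ncard = e i) ∧
      (∀ i, U i = Submodule.span ℂ
        ((fun b => Pi.single b (1 : ℂ)) '' {b ∈ S | segDeg st b = i})) := by
  obtain ⟨⟨hUgr, hUshift⟩, hUdim⟩ := hU
  simp only [span_image_single_one_eq_spanSubset]
  constructor
  · intro hfix
    set S := {b : SegBasis d0 len | Pi.single b 1 ∈ U (segDeg st b)}
    have hspan : ∀ i, U i = Pi.spanSubset ℂ {b ∈ S | segDeg st b = i} := fun i => by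
      convert eq_spanSubset_of_zAct_invariant hAG1 (hUgr i) (hfix · i) using 2
      ext b
      exact ⟨fun ⟨h, hd⟩ => ⟨hd, hd ▸ h⟩, fun ⟨hd, h⟩ => ⟨show _ ∈ U _ from hd ▸ h, hd⟩⟩
    refine ⟨S, ?_, fun i => by rw [← hUdim i, hspan i, Pi.dim_spanSubset], hspan⟩
    rintro ⟨j, p⟩ hb h
    have := hUshift _ ⟨_, hb, segShift_single j p h⟩
    rwa [← segDeg_succ] at this
  · rintro ⟨S, -, -, hspan⟩ z i
    rw [hspan i]
    exact map_spanSubset_of_diagonal (fun _ _ => rfl) (fun _ => Units.ne_zero _) _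

/-- Let `M` be a nilpotent representation of `Δ_n` with an attractive
grading `wt` on its coefficient quiver `Q(M)`, and let `ℂ*` act on `Gr_e(M)` by
`z · b = z^{wt b} b`.  A point `U ∈ Gr_e(M)` is fixed by the `ℂ*`-action if and only if
each `U i` is spanned by a subset of the chosen basis; more precisely, if and only if
there is a successor closed subquiver `S` of `Q(M)` with dimension vector `e`
(`S` is a set of basis vectors closed under the shift, with `e i` elements of each
degree `i`) such that `U i` is the span of the coordinate vectors of the elements of
`S` of degree `i`. -/
theorem zAct_fixed_points
    (d0 n : ℕ) (len : Fin d0 → ℕ) (st : Fin d0 → ZMod n) (e : ZMod n → ℕ)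
    (wt : SegBasis d0 len → ℤ)
    (hAG1 : ∀ b b' : SegBasis d0 len, segDeg st b = segDeg st b' →
      wt b = wt b' → b = b')
    (hAG2 : ∃ d : ZMod n → ℤ, ∀ (j : Fin d0) (p : Fin (len j))
      (h : (p : ℕ) + 1 < len j),
      wt ⟨j, ⟨(p : ℕ) + 1, h⟩⟩ = wt ⟨j, p⟩ + d (segDeg st ⟨j, p⟩))
    (U : ZMod n → Submodule ℂ (SegSpace d0 len)) (hU : InGrass st e U) :
    (∀ z : ℂˣ, ∀ i, (U i).map (zAct wt z) = U i) ↔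
    ∃ S : Set (SegBasis d0 len),
      (∀ b ∈ S, ∀ h : (b.2 : ℕ) + 1 < len b.1,
        (⟨b.1, ⟨(b.2 : ℕ) + 1, h⟩⟩ : SegBasis d0 len) ∈ S) ∧
      (∀ i, {b ∈ S | segDeg st b = i}.ncard = e i) ∧
      (∀ i, U i = Submodule.span ℂ
        ((fun b => Pi.single b (1 : ℂ)) '' {b ∈ S | segDeg st b = i})) :=
  zAct_fixed_points_general d0 n len st e wt hAG1 U hU
end

section
/- Let X be a projective T-variety admitting a filtration ∅ = Z_0 ⊂ Z_1 ⊂ … ⊂ Z_m = X into closed T-stable subvarieties with X^T = {x_1,…,x_m}, x_i ∈ W_i = Z_i \ Z_{i−1}, such that each (Z_i, T) is a GKM-variety and suitable equivariant Euler classes Eu_T(x_i, Z_i) ∈ S exist. Suppose {θ^{(i)}} and {ψ^{(i)}} are two families in H_T^•(X) (identified with their images under localisation to the fixed points, so each class is a tuple of elements of S = H_T^•(pt)) both satisfying: (1) I_i(θ^{(i)}) = 1; (2) I_j(θ^{(i)}) = 0 for j ≠ i; (3) θ^{(i)}_{x_j} = 0 for j < i; (4) θ^{(i)}_{x_i} =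 Eu_T(x_i, Z_i); where I_j(f) = Σ_{x_k ∈ Z_j} f_{x_k} / Eu_T(x_k, Z_j). Then θ^{(i)} = ψ^{(i)} for all i. -/
open scoped BigOperators

/-- The local index `I_j(f)` of a localised equivariant cohomology class
`f = (f_{x_1}, …, f_{x_m})` at the fixed point `x_j`:
`I_j(f) = Σ_{x_k ∈ Z_j} f_{x_k} / Eu_T(x_k, Z_j)`;
the fixed points of the filtration step `Z_j` are `x_1, …, x_j`. -/
noncomputable def localIndex {S : Type*} [CommRing S] [IsDomain S] {m : ℕ}
    (Eu : Fin m → Fin m → FractionRing S) (f : Fin m → S) (j : Fin m) :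
    FractionRing S :=
  ∑ k ∈ Finset.univ.filter (fun k : Fin m => k ≤ j),
    algebraMap S (FractionRing S) (f k) / Eu j k

/-!
The local indices of a class form a triangular system in its entries: `I_j(f)` involves only
`f_{x_1}, …, f_{x_j}`, and `f_{x_j}` enters with the invertible coefficient `1 / Eu_T(x_j, Z_j)`.
Hence a class is determined by its local indices, and conditions (1) and (2) prescribe all local
indices of `θ^{(i)}`.
-/

section LocalIndex

variable {S : Type*} [CommRing S] [IsDomain S] {m : ℕ} (Eu : Fin m → Fin m → FractionRing S)

theorem localIndex_sub (f g : Fin m → S) (j : Fin m) :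
    localIndex Eu (f - g) j = localIndex Eu f j - localIndex Eu g j := by
  simp only [localIndex, Pi.sub_apply, map_sub, sub_div, Finset.sum_sub_distrib]

theorem localIndex_eq_div_of_forall_lt_eq_zero {f : Fin m → S} {j : Fin m}
    (hf : ∀ k < j, f k = 0) :
    localIndex Eu f j = algebraMap S (FractionRing S) (f j) / Eu j j := by
  refine Finset.sum_eq_single_of_mem j (by simp) fun k hk hkj => ?_
  have hlt : k < j := lt_of_le_of_ne (Finset.mem_filter.mp hk).2 hkj
  rw [hf k hlt, map_zero, zero_div]

variable {Eu}

theorem eq_zero_of_localIndex_eq_zero (hEu : ∀ j, Eu j j ≠ 0) {f : Fin m → S}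
    (hf : ∀ j, localIndex Eu f j = 0) : f = 0 := by
  funext j
  induction j using WellFoundedLT.induction with
  | _ j ih =>
    have hdiv := localIndex_eq_div_of_forall_lt_eq_zero Eu ih
    rw [hf j, eq_comm, div_eq_zero_iff, or_iff_left (hEu j)] at hdiv
    exact IsFractionRing.to_map_eq_zero_iff.mp hdiv

theorem eq_of_localIndex_eq (hEu : ∀ j, Eu j j ≠ 0) {f g : Fin m → S}
    (hfg : ∀ j, localIndex Eu f j = localIndex Eu g j) : f = g :=
  sub_eq_zero.mp <| eq_zero_of_localIndex_eq_zero hEu fun j => by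
    rw [localIndex_sub, hfg, sub_self]

end LocalIndex

theorem distinguished_basis_unique_general
    {S : Type*} [CommRing S] [IsDomain S] {m : ℕ}
    (Eu : Fin m → Fin m → FractionRing S)
    (hEu : ∀ j k : Fin m, k ≤ j → Eu j k ≠ 0)
    (θ ψ : Fin m → Fin m → S)
    (hθ1 : ∀ i, localIndex Eu (θ i) i = 1)
    (hθ2 : ∀ i j, j ≠ i → localIndex Eu (θ i) j = 0)
    (hψ1 : ∀ i, localIndex Eu (ψ i) i = 1)
    (hψ2 : ∀ i j, j ≠ i → localIndex Eu (ψ i) j = 0) :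
    θ = ψ := by
  funext i
  refine eq_of_localIndex_eq (fun j => hEu j j le_rfl) fun j => ?_
  rcases eq_or_ne j i with rfl | hji
  · rw [hθ1, hψ1]
  · rw [hθ2 i j hji, hψ2 i j hji]

/-- **uniqueness of the distinguished module basis.**  Let `X` be a
projective `T`-variety with a filtration `∅ = Z_0 ⊂ Z_1 ⊂ … ⊂ Z_m = X` into closed
`T`-stable subvarieties, fixed points `x_1, …, x_m` with `x_i ∈ W_i = Z_i \ Z_{i-1}`
(so the fixed points of `Z_j` are `x_1, …, x_j`), each `(Z_i, T)` a GKM-variety, with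
(nonzero) equivariant Euler classes `Eu j k = Eu_T(x_k, Z_j)` in the fraction field `Q`
of `S = H_T^•(pt)`.  If two families `θ, ψ` of localised classes (each class a tuple over
the fixed points with entries in `S`) both satisfy
(1) `I_i(θ^{(i)}) = 1`, (2) `I_j(θ^{(i)}) = 0` for `j ≠ i`,
(3) `θ^{(i)}_{x_j} = 0` for `j < i`, (4) `θ^{(i)}_{x_i} = Eu_T(x_i, Z_i)`,
then `θ = ψ`. -/
theorem distinguished_basis_unique
    {S : Type*} [CommRing S] [IsDomain S] {m : ℕ}
    (Eu : Fin m → Fin m → FractionRing S)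
    (hEu : ∀ j k : Fin m, k ≤ j → Eu j k ≠ 0)
    (θ ψ : Fin m → Fin m → S)
    (hθ1 : ∀ i, localIndex Eu (θ i) i = 1)
    (hθ2 : ∀ i j, j ≠ i → localIndex Eu (θ i) j = 0)
    (hθ3 : ∀ i j, j < i → θ i j = 0)
    (hθ4 : ∀ i, algebraMap S (FractionRing S) (θ i i) = Eu i i)
    (hψ1 : ∀ i, localIndex Eu (ψ i) i = 1)
    (hψ2 : ∀ i j, j ≠ i → localIndex Eu (ψ i) j = 0)
    (hψ3 : ∀ i j, j < i → ψ i j = 0)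
    (hψ4 : ∀ i, algebraMap S (FractionRing S) (ψ i i) = Eu i i) :
    θ = ψ :=
  distinguished_basis_unique_general Eu hEu θ ψ hθ1 hθ2 hψ1 hψ2
end
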